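/- For real d×d positive semidefinite matrices A and B, the squared Bures distance satisfies d_B²(A,B) = 0 if and only if A = B. -/

import Mathlib

open MeasureTheory ProbabilityTheory Matrix
open scoped Classical

/-- The unique positive semidefinite square root of a positive semidefinite real matrix
(junk value `0` if the matrix is not positive semidefinite). -/
noncomputable def psdSqrt {d : ℕ} (M : Matrix (Fin d) (Fin d) ℝ) : Matrix (Fin d) (Fin d) ℝ :=
  if h : M.PosSemidef then
    h.1.eigenvectorUnitary.1 * diagonal ((↑) ∘ (fun x => Real.sqrt x) ∘ h.1.eigenvalues) *
      (star h.1.eigenvectorUnitary : Matrix (Fin d) (Fin d) ℝ)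
  else 0

/-- The squared Bures distance `Tr[A + B − 2 (A^{1/2} B A^{1/2})^{1/2}]`. -/
noncomputable def buresSq {d : ℕ} (A B : Matrix (Fin d) (Fin d) ℝ) : ℝ :=
  (A + B - 2 • psdSqrt (psdSqrt A * B * psdSqrt A)).trace

/-!
Write `C = A^{1/2}`, `R = B^{1/2}` and `S = |R C| = (C B C)^{1/2}`. Partial polar decomposition gives a
partial isometry `U` with `Uᴴ (R C) = S`, and with it
`d_B²(A,B) = ‖R - R U Uᴴ‖² + ‖R U - C‖²` (Frobenius norms). If this vanishes then
`A = C Cᴴ = (R U)(R U)ᴴ = (R U Uᴴ) Rᴴ = R Rᴴ = B`.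
-/

open scoped MatrixOrder ComplexOrder

namespace Matrix

variable {n : Type*} [Fintype n]

theorem exists_partialIsometry_conjTranspose_mul_eq_sqrt {𝕜 : Type*} [RCLike 𝕜] [DecidableEq n]
    (X : Matrix n n 𝕜) :
    ∃ U : Matrix n n 𝕜, U * Uᴴ * U = U ∧ Uᴴ * X = CFC.sqrt (Xᴴ * X) := by
  set S := CFC.sqrt (Xᴴ * X)
  -- `T` is the Moore–Penrose pseudo-inverse of `S` (thanks to the junk value `0⁻¹ = 0`),
  -- and `U = X T`.
  set T := cfc (fun x : ℝ => x⁻¹) S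
  have hmul (f g : ℝ → ℝ) : cfc f S * cfc g S = cfc (fun x => f x * g x) S :=
    (cfc_mul f g S (S.finite_real_spectrum.continuousOn _)
      (S.finite_real_spectrum.continuousOn _)).symm
  have hid : cfc (fun x : ℝ => x) S = S := cfc_id' ℝ S
  have hT : Tᴴ = T := IsSelfAdjoint.cfc
  have hSS : Xᴴ * X = S * S :=
    (CFC.sqrt_mul_sqrt_self _ (posSemidef_conjTranspose_mul_self X).nonneg).symm
  have hTSST : T * T * (S * S) * T = T := by
    rw [← hid, hmul, hmul, hmul, hmul]
    congr 1
    funext x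
    rcases eq_or_ne x 0 with rfl | hx
    · simp
    · field_simp
  have hTSS : T * (S * S) = S := by
    rw [← hid, hmul, hmul]
    congr 1
    funext x
    rcases eq_or_ne x 0 with rfl | hx
    · simp
    · field_simp
  refine ⟨X * T, ?_, ?_⟩
  · calc X * T * (X * T)ᴴ * (X * T) = X * (T * T * (Xᴴ * X) * T) := by
          rw [conjTranspose_mul, hT]; noncomm_ring
      _ = X * T := by rw [hSS, hTSST]
  · rw [conjTranspose_mul, hT, Matrix.mul_assoc, hSS, hTSS]

theorem trace_add_trace_sub_two_mul_trace_eq_of_partialIsometry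
    (Y Z U : Matrix n n ℝ) (hU : U * Uᴴ * U = U) :
    (Yᴴ * Y).trace + (Zᴴ * Z).trace - 2 * (Uᴴ * (Yᴴ * Z)).trace =
      ((Y - Y * U * Uᴴ)ᴴ * (Y - Y * U * Uᴴ)).trace + ((Y * U - Z)ᴴ * (Y * U - Z)).trace := by
  have hPP : U * Uᴴ * (U * Uᴴ) = U * Uᴴ := by rw [← Matrix.mul_assoc, hU]
  have hPG : (U * Uᴴ * (Yᴴ * Y)).trace = (Yᴴ * Y * (U * Uᴴ)).trace := trace_mul_comm _ _
  have hPGP : (U * Uᴴ * (Yᴴ * Y) * (U * Uᴴ)).trace = (Yᴴ * Y * (U * Uᴴ)).trace := by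
    rw [trace_mul_comm, ← Matrix.mul_assoc, hPP, hPG]
  have hUGU : (Uᴴ * (Yᴴ * Y) * U).trace = (Yᴴ * Y * (U * Uᴴ)).trace := by
    rw [trace_mul_comm, ← Matrix.mul_assoc, hPG]
  have e₁ : (Y - Y * U * Uᴴ)ᴴ * (Y - Y * U * Uᴴ) =
      Yᴴ * Y - U * Uᴴ * (Yᴴ * Y) - Yᴴ * Y * (U * Uᴴ) + U * Uᴴ * (Yᴴ * Y) * (U * Uᴴ) := by
    simp only [conjTranspose_sub, conjTranspose_mul, conjTranspose_conjTranspose]; noncomm_ring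
  have e₂ : (Y * U - Z)ᴴ * (Y * U - Z) =
      Uᴴ * (Yᴴ * Y) * U - Uᴴ * (Yᴴ * Z) - (Uᴴ * (Yᴴ * Z))ᴴ + Zᴴ * Z := by
    simp only [conjTranspose_sub, conjTranspose_mul, conjTranspose_conjTranspose]; noncomm_ring
  rw [e₁, e₂]
  simp only [trace_add, trace_sub, trace_conjTranspose, star_trivial, hPG, hPGP, hUGU]
  ring

end Matrix

section Bures

variable {d : ℕ} {A B : Matrix (Fin d) (Fin d) ℝ}

theorem psdSqrt_eq_sqrt (hA : A.PosSemidef) : psdSqrt A = CFC.sqrt A := by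
  rw [CFC.sqrt_eq_real_sqrt A hA.nonneg, cfcₙ_eq_cfc, hA.1.cfc_eq, IsHermitian.cfc,
    Unitary.conjStarAlgAut_apply, psdSqrt, dif_pos hA]
  rfl

theorem buresSq_eq_trace_sub (hA : A.PosSemidef) (hB : B.PosSemidef) :
    buresSq A B = A.trace + B.trace -
      2 * (CFC.sqrt ((CFC.sqrt B * CFC.sqrt A)ᴴ * (CFC.sqrt B * CFC.sqrt A))).trace := by
  have hC : (CFC.sqrt A)ᴴ = CFC.sqrt A := (CFC.sqrt_nonneg A).isSelfAdjoint
  have hR : (CFC.sqrt B)ᴴ = CFC.sqrt B := (CFC.sqrt_nonneg B).isSelfAdjoint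
  have hCBC : (CFC.sqrt B * CFC.sqrt A)ᴴ * (CFC.sqrt B * CFC.sqrt A) =
      CFC.sqrt A * B * CFC.sqrt A := by
    rw [conjTranspose_mul, hC, hR]
    conv_rhs => rw [← CFC.sqrt_mul_sqrt_self B hB.nonneg]
    noncomm_ring
  rw [hCBC, buresSq, psdSqrt_eq_sqrt hA,
    psdSqrt_eq_sqrt (hCBC ▸ posSemidef_conjTranspose_mul_self _),
    trace_sub, trace_add, trace_smul, nsmul_eq_mul, Nat.cast_ofNat]

theorem buresSq_self (hA : A.PosSemidef) : buresSq A A = 0 := by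
  rw [buresSq_eq_trace_sub hA hA, CFC.sqrt_mul_sqrt_self A hA.nonneg, hA.1.eq,
    CFC.sqrt_mul_self A hA.nonneg]
  ring

theorem eq_of_buresSq_eq_zero (hA : A.PosSemidef) (hB : B.PosSemidef) (h : buresSq A B = 0) :
    A = B := by
  set C := CFC.sqrt A
  set R := CFC.sqrt B
  have hC : Cᴴ = C := (CFC.sqrt_nonneg A).isSelfAdjoint
  have hR : Rᴴ = R := (CFC.sqrt_nonneg B).isSelfAdjoint
  obtain ⟨U, hU, hUX⟩ := exists_partialIsometry_conjTranspose_mul_eq_sqrt (R * C)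
  have hsum : buresSq A B = ((R - R * U * Uᴴ)ᴴ * (R - R * U * Uᴴ)).trace +
      ((R * U - C)ᴴ * (R * U - C)).trace := by
    rw [← trace_add_trace_sub_two_mul_trace_eq_of_partialIsometry R C U hU, hR, hC,
      CFC.sqrt_mul_sqrt_self A hA.nonneg, CFC.sqrt_mul_sqrt_self B hB.nonneg,
      buresSq_eq_trace_sub hA hB, ← hUX]
    ring
  have hG := (posSemidef_conjTranspose_mul_self (R - R * U * Uᴴ)).trace_nonneg
  have hH := (posSemidef_conjTranspose_mul_self (R * U - C)).trace_nonneg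
  have hRUU : R - R * U * Uᴴ = 0 := trace_conjTranspose_mul_self_eq_zero_iff.1 (by linarith)
  have hRU : R * U - C = 0 := trace_conjTranspose_mul_self_eq_zero_iff.1 (by linarith)
  calc A = C * Cᴴ := by rw [hC, CFC.sqrt_mul_sqrt_self A hA.nonneg]
    _ = R * U * Uᴴ * Rᴴ := by
      rw [← sub_eq_zero.1 hRU, conjTranspose_mul]; noncomm_ring
    _ = B := by rw [← sub_eq_zero.1 hRUU, hR, CFC.sqrt_mul_sqrt_self B hB.nonneg]

end Bures

/-- for PSD matrices `A, B`, `d_B²(A,B) = 0 ↔ A = B`. -/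
theorem stmt3 (d : ℕ) (A B : Matrix (Fin d) (Fin d) ℝ)
    (hA : A.PosSemidef) (hB : B.PosSemidef) :
    buresSq A B = 0 ↔ A = B := by
  constructor
  · exact eq_of_buresSq_eq_zero hA hB
  · rintro rfl
    exact buresSq_self hA
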